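/- Let a ≥ 0, 0 < γ < 1, β ∈ (0,1), p > 1/β, q = p/(p-1). Let b : [0,∞) → ℝ be a nonnegative nondecreasing continuous function, and let l be a nonnegative function with t^{(1-γ)(1-β)} l(t) continuous on (0,∞) and in Lᵖ_loc[0,∞). If u is a function on (0,∞) with t^{1-β} u(t) continuous and nonnegative on [0,∞) and u(t) ≤ a t^{β-1} + b(t) ∫₀ᵗ (t-s)^{β-1} l(s) u(s)^γ ds for all t ∈ (0,∞), then u(t) ≤ 2^{1-1/p} t^{β-1} (a^{p(1-γ)} + (1-γ) 2^{(p-1)γ} c(t)^p ∫₀ᵗ s^{p(1-γ)(1-β)} l(s)^p ds)^{1/(p(1-γ))} for all t ∈ (0,∞), where c(t) = 2^{1/q} b(t) t^{β-1+1/q} / (qβ-q+1)^{1/q}. -/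

import Mathlib

/-!
Put `v t = t ^ (1 - β) * u t` and `L s = s ^ ((1 - γ) * (1 - β)) * l s`; the integrand becomes
`(t - s) ^ (β - 1) * s ^ (β - 1) * (L s * v s ^ γ)`. Hölder's inequality with exponents `q, p`,
together with `∫₀ᵗ (t - s) ^ (x - 1) * s ^ (x - 1) ≤ 2 t ^ (2x - 1) / x` for `x = qβ - q + 1 ∈ (0, 1]`
(from the subadditivity of `r ↦ r ^ (1 - x)`), gives `v t ≤ a + c t * (∫₀ᵗ L ^ p v ^ (pγ)) ^ (1/p)`.
Raising this to the power `p`, and using that `c` is nondecreasing, `w = v ^ p` satisfies the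
Bihari-type inequality `w τ ≤ A + C ∫₀^τ L ^ p w ^ γ` on `(0, t]` with `A = 2 ^ (p - 1) a ^ p`,
`C = 2 ^ (p - 1) c t ^ p`. If `Φ` denotes its right-hand side, `Φ' ≤ C L ^ p Φ ^ γ`, so
`(1 - γ) C ∫₀^τ L ^ p - Φ τ ^ (1 - γ)` is nondecreasing; this bounds `w t`, and
`u t = t ^ (β - 1) * w t ^ (1 / p)`.
-/

open MeasureTheory Set Filter

namespace Real

lemma rpow_add_le_mul_rpow_add_rpow {p a b : ℝ} (ha : 0 ≤ a) (hb : 0 ≤ b) (hp : 1 ≤ p) :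
    (a + b) ^ p ≤ 2 ^ (p - 1) * (a ^ p + b ^ p) := by
  lift a to NNReal using ha
  lift b to NNReal using hb
  exact_mod_cast NNReal.rpow_add_le_mul_rpow_add_rpow a b hp

end Real

lemma rpow_sub_mul_rpow_le {x s t : ℝ} (hx0 : 0 ≤ x) (hx1 : x ≤ 1) (hs : 0 < s) (hst : s < t) :
    (t - s) ^ (x - 1) * s ^ (x - 1) ≤ t ^ (x - 1) * (s ^ (x - 1) + (t - s) ^ (x - 1)) := by
  have hts : 0 < t - s := sub_pos.2 hst
  have hsub : t ^ (1 - x) ≤ s ^ (1 - x) + (t - s) ^ (1 - x) := by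
    simpa using Real.rpow_add_le_add_rpow hs.le hts.le (sub_nonneg.2 hx1) (by linarith)
  have hinv : ∀ y : ℝ, 0 < y → y ^ (x - 1) = (y ^ (1 - x))⁻¹ := fun y hy => by
    rw [← Real.rpow_neg hy.le, neg_sub]
  rw [hinv t (hs.trans hst), hinv s hs, hinv _ hts]
  have h1 := Real.rpow_pos_of_pos (hs.trans hst) (1 - x)
  have h2 := Real.rpow_pos_of_pos hs (1 - x)
  have h3 := Real.rpow_pos_of_pos hts (1 - x)
  field_simp
  linarith

lemma intervalIntegrable_rpow_sub_mul_rpow {x t : ℝ} (hx0 : 0 < x) (hx1 : x ≤ 1) (ht : 0 < t) :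
    IntervalIntegrable (fun s => (t - s) ^ (x - 1) * s ^ (x - 1)) volume 0 t := by
  have hg1 : IntervalIntegrable (fun s : ℝ => s ^ (x - 1)) volume 0 t :=
    intervalIntegral.intervalIntegrable_rpow' (by linarith)
  have hg2 : IntervalIntegrable (fun s : ℝ => (t - s) ^ (x - 1)) volume 0 t := by
    simpa using (hg1.comp_sub_left t).symm
  rw [intervalIntegrable_iff_integrableOn_Ioo_of_le ht.le] at hg1 hg2 ⊢
  refine Integrable.mono' ((hg1.add hg2).const_mul (t ^ (x - 1))) ?_ ?_
  · exact (((measurable_const.sub measurable_id).pow_const _).mul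
      (measurable_id.pow_const _)).aestronglyMeasurable
  · refine ae_restrict_of_forall_mem measurableSet_Ioo fun s hs => ?_
    rw [Real.norm_of_nonneg (mul_nonneg (Real.rpow_nonneg (sub_nonneg.2 hs.2.le) _)
      (Real.rpow_nonneg hs.1.le _))]
    exact rpow_sub_mul_rpow_le hx0.le hx1 hs.1 hs.2

lemma integral_rpow_sub_mul_rpow_le {x t : ℝ} (hx0 : 0 < x) (hx1 : x ≤ 1) (ht : 0 < t) :
    ∫ s in (0:ℝ)..t, (t - s) ^ (x - 1) * s ^ (x - 1) ≤ 2 * t ^ (2 * x - 1) / x := by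
  have hg1 : IntervalIntegrable (fun s : ℝ => s ^ (x - 1)) volume 0 t :=
    intervalIntegral.intervalIntegrable_rpow' (by linarith)
  have hg2 : IntervalIntegrable (fun s : ℝ => (t - s) ^ (x - 1)) volume 0 t := by
    simpa using (hg1.comp_sub_left t).symm
  have hI : ∫ s in (0:ℝ)..t, s ^ (x - 1) = t ^ x / x := by
    rw [integral_rpow (Or.inl (by linarith)), sub_add_cancel,
      Real.zero_rpow hx0.ne', sub_zero]
  have hI' : ∫ s in (0:ℝ)..t, (t - s) ^ (x - 1) = t ^ x / x := by
    rw [intervalIntegral.integral_comp_sub_left (fun s => s ^ (x - 1)), sub_self, sub_zero, hI]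
  calc ∫ s in (0:ℝ)..t, (t - s) ^ (x - 1) * s ^ (x - 1)
      ≤ ∫ s in (0:ℝ)..t, t ^ (x - 1) * (s ^ (x - 1) + (t - s) ^ (x - 1)) :=
        intervalIntegral.integral_mono_on_of_le_Ioo ht.le
          (intervalIntegrable_rpow_sub_mul_rpow hx0 hx1 ht) ((hg1.add hg2).const_mul _)
          fun s hs => rpow_sub_mul_rpow_le hx0.le hx1 hs.1 hs.2
    _ = 2 * (t ^ (x - 1) * t ^ x) / x := by
        rw [intervalIntegral.integral_const_mul, intervalIntegral.integral_add hg1 hg2, hI, hI']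
        ring
    _ = 2 * t ^ (2 * x - 1) / x := by
        rw [← Real.rpow_add ht]; ring_nf

lemma memLp_ofReal_of_integrable_rpow {α : Type*} [MeasurableSpace α] {μ : Measure α}
    {f : α → ℝ} {p : ℝ} (hp : 0 < p) (hf0 : 0 ≤ᵐ[μ] f) (hf : AEStronglyMeasurable f μ)
    (hfp : Integrable (fun x => f x ^ p) μ) : MemLp f (ENNReal.ofReal p) μ := by
  rw [← integrable_norm_rpow_iff hf (by simpa using hp) ENNReal.ofReal_ne_top,
    ENNReal.toReal_ofReal hp.le]
  refine hfp.congr ?_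
  filter_upwards [hf0] with x hx
  rw [Real.norm_of_nonneg hx]

theorem integral_mul_le_of_integrable_rpow {α : Type*} [MeasurableSpace α] {μ : Measure α}
    {p q : ℝ} (hpq : p.HolderConjugate q) {f g : α → ℝ} (hf0 : 0 ≤ᵐ[μ] f) (hg0 : 0 ≤ᵐ[μ] g)
    (hf : AEStronglyMeasurable f μ) (hg : AEStronglyMeasurable g μ)
    (hfp : Integrable (fun x => f x ^ p) μ) (hgq : Integrable (fun x => g x ^ q) μ) :
    ∫ x, f x * g x ∂μ ≤ (∫ x, f x ^ p ∂μ) ^ (1 / p) * (∫ x, g x ^ q ∂μ) ^ (1 / q) :=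
  integral_mul_le_Lp_mul_Lq_of_nonneg hpq hf0 hg0
    (memLp_ofReal_of_integrable_rpow hpq.pos hf0 hf hfp)
    (memLp_ofReal_of_integrable_rpow hpq.symm.pos hg0 hg hgq)

lemma rpow_one_sub_mul_rpow_div_rpow_eq {β q τ : ℝ} (hq : q ≠ 0) (hτ : 0 < τ)
    (hx : 0 < q * β - q + 1) :
    τ ^ (1 - β) * (2 * τ ^ (2 * (q * β - q + 1) - 1) / (q * β - q + 1)) ^ (1 / q)
      = 2 ^ (1 / q) * τ ^ (β - 1 + 1 / q) / (q * β - q + 1) ^ (1 / q) := by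
  rw [Real.div_rpow (by positivity) hx.le, Real.mul_rpow zero_le_two (by positivity),
    ← Real.rpow_mul hτ.le, mul_div_assoc', mul_left_comm, ← Real.rpow_add hτ]
  congr 3
  field_simp
  ring

theorem integral_rpow_sub_mul_rpow_mul_le {β p q τ : ℝ} (hβ : β < 1)
    (hpq : p.HolderConjugate q) (hx : 0 < q * β - q + 1) (hτ : 0 < τ) {g : ℝ → ℝ}
    (hg0 : ∀ s ∈ Ioc 0 τ, 0 ≤ g s) (hg : AEStronglyMeasurable g (volume.restrict (Ioc 0 τ)))
    (hgp : IntervalIntegrable (fun s => g s ^ p) volume 0 τ) :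
    τ ^ (1 - β) * ∫ s in (0:ℝ)..τ, (τ - s) ^ (β - 1) * s ^ (β - 1) * g s ≤
      2 ^ (1 / q) * τ ^ (β - 1 + 1 / q) / (q * β - q + 1) ^ (1 / q) *
        (∫ s in (0:ℝ)..τ, g s ^ p) ^ (1 / p) := by
  set x := q * β - q + 1 with hx_def
  have hq := hpq.symm.pos
  have hx1 : x ≤ 1 := by nlinarith
  set f : ℝ → ℝ := fun s => (τ - s) ^ (β - 1) * s ^ (β - 1)
  have hf0 : ∀ s ∈ Ioc 0 τ, 0 ≤ f s := fun s hs =>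
    mul_nonneg (Real.rpow_nonneg (sub_nonneg.2 hs.2) _) (Real.rpow_nonneg hs.1.le _)
  have hfq : ∀ s ∈ Ioc 0 τ, f s ^ q = (τ - s) ^ (x - 1) * s ^ (x - 1) := fun s hs => by
    rw [Real.mul_rpow (Real.rpow_nonneg (sub_nonneg.2 hs.2) _) (Real.rpow_nonneg hs.1.le _),
      ← Real.rpow_mul (sub_nonneg.2 hs.2), ← Real.rpow_mul hs.1.le,
      show (β - 1) * q = x - 1 by rw [hx_def]; ring]
  have hfq_int : ∫ s in Ioc 0 τ, f s ^ q = ∫ s in (0:ℝ)..τ, (τ - s) ^ (x - 1) * s ^ (x - 1) := by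
    rw [intervalIntegral.integral_of_le hτ.le]
    exact setIntegral_congr_fun measurableSet_Ioc hfq
  have hHolder := integral_mul_le_of_integrable_rpow hpq.symm
    (ae_restrict_of_forall_mem measurableSet_Ioc hf0)
    (ae_restrict_of_forall_mem measurableSet_Ioc hg0)
    (((measurable_const.sub measurable_id).pow_const _).mul
      (measurable_id.pow_const _)).aestronglyMeasurable hg
    ((intervalIntegrable_rpow_sub_mul_rpow hx hx1 hτ).1.congr
      (ae_restrict_of_forall_mem measurableSet_Ioc fun s hs => (hfq s hs).symm)) hgp.1
  rw [intervalIntegral.integral_of_le hτ.le, intervalIntegral.integral_of_le hτ.le,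
    ← rpow_one_sub_mul_rpow_div_rpow_eq hq.ne' hτ hx, mul_assoc]
  gcongr
  refine hHolder.trans (mul_le_mul_of_nonneg_right (Real.rpow_le_rpow ?_ ?_ (by positivity))
    (Real.rpow_nonneg ?_ _))
  · exact setIntegral_nonneg measurableSet_Ioc fun s hs => Real.rpow_nonneg (hf0 s hs) _
  · exact hfq_int ▸ integral_rpow_sub_mul_rpow_le hx hx1 hτ
  · exact setIntegral_nonneg measurableSet_Ioc fun s hs => Real.rpow_nonneg (hg0 s hs) _

lemma intervalIntegral_nonneg_of_Ioc {f : ℝ → ℝ} {a b : ℝ} (hab : a ≤ b)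
    (hf : ∀ s ∈ Ioc a b, 0 ≤ f s) : 0 ≤ ∫ s in a..b, f s := by
  rw [intervalIntegral.integral_of_le hab]
  exact setIntegral_nonneg measurableSet_Ioc hf

lemma continuousOn_primitive_of_le {f : ℝ → ℝ} {a b : ℝ} (hab : a ≤ b)
    (hf : IntervalIntegrable f volume a b) :
    ContinuousOn (fun u => ∫ x in a..u, f x) (Icc a b) := by
  simpa only [uIcc_of_le hab] using
    intervalIntegral.continuousOn_primitive_interval' hf left_mem_uIcc

lemma hasDerivAt_integral_of_continuousOn_Ioo {f : ℝ → ℝ} {a b τ : ℝ}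
    (hf : IntervalIntegrable f volume a b) (hcont : ContinuousOn f (Ioo a b)) (hτ : τ ∈ Ioo a b) :
    HasDerivAt (fun u => ∫ x in a..u, f x) (f τ) τ :=
  intervalIntegral.integral_hasDerivAt_right
    (hf.mono_set (by
      rw [uIcc_of_le (hτ.1.trans hτ.2).le, uIcc_of_le hτ.1.le]
      exact Icc_subset_Icc_right hτ.2.le))
    (hcont.stronglyMeasurableAtFilter isOpen_Ioo τ hτ)
    (hcont.continuousAt (isOpen_Ioo.mem_nhds hτ))

lemma rpow_le_rpow_add_of_hasDerivAt_le {Φ Φ' P k : ℝ → ℝ} {γ a b : ℝ} (hγ : γ ≤ 1)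
    (hab : a ≤ b) (hΦ : ContinuousOn Φ (Icc a b)) (hΦ_pos : ∀ τ ∈ Icc a b, 0 < Φ τ)
    (hP : ContinuousOn P (Icc a b)) (hΦ' : ∀ τ ∈ Ioo a b, HasDerivAt Φ (Φ' τ) τ)
    (hP' : ∀ τ ∈ Ioo a b, HasDerivAt P (k τ) τ)
    (hle : ∀ τ ∈ Ioo a b, Φ' τ ≤ k τ * Φ τ ^ γ) :
    Φ b ^ (1 - γ) ≤ Φ a ^ (1 - γ) + (1 - γ) * (P b - P a) := by
  have hmono : MonotoneOn (fun τ => (1 - γ) * P τ - Φ τ ^ (1 - γ)) (Icc a b) := by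
    refine monotoneOn_of_hasDerivWithinAt_nonneg
      (f' := fun τ => (1 - γ) * (k τ - Φ' τ * Φ τ ^ (-γ))) (convex_Icc a b)
      ((hP.const_mul _).sub (hΦ.rpow_const fun τ hτ => Or.inl (hΦ_pos τ hτ).ne'))
      (fun τ hτ => ?_) (fun τ hτ => ?_) <;> rw [interior_Icc] at hτ
    · have hΦτ := hΦ_pos τ (Ioo_subset_Icc_self hτ)
      refine (((hP' τ hτ).const_mul (1 - γ)).sub
        ((hΦ' τ hτ).rpow_const (p := 1 - γ) (Or.inl hΦτ.ne'))).hasDerivWithinAt.congr_deriv ?_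
      rw [show 1 - γ - 1 = -γ by ring]
      ring
    · have hΦτ := hΦ_pos τ (Ioo_subset_Icc_self hτ)
      have hcancel : Φ τ ^ γ * Φ τ ^ (-γ) = 1 := by
        rw [← Real.rpow_add hΦτ, add_neg_cancel, Real.rpow_zero]
      have : Φ' τ * Φ τ ^ (-γ) ≤ k τ := by
        calc Φ' τ * Φ τ ^ (-γ) ≤ k τ * Φ τ ^ γ * Φ τ ^ (-γ) :=
              mul_le_mul_of_nonneg_right (hle τ hτ) (Real.rpow_nonneg hΦτ.le _)
          _ = k τ := by rw [mul_assoc, hcancel, mul_one]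
      exact mul_nonneg (sub_nonneg.2 hγ) (sub_nonneg.2 this)
  have := hmono (left_mem_Icc.2 hab) (right_mem_Icc.2 hab) hab
  simp only at this
  linarith

theorem bihari_rpow_of_pos {A C γ t : ℝ} (hA : 0 < A) (hC : 0 ≤ C) (hγ : γ ∈ Ioo 0 1)
    (ht : 0 < t) {K w : ℝ → ℝ} (hK_cont : ContinuousOn K (Ioo 0 t))
    (hK_nonneg : ∀ s ∈ Ioc 0 t, 0 ≤ K s) (hK_int : IntervalIntegrable K volume 0 t)
    (hw_cont : ContinuousOn w (Icc 0 t)) (hw_nonneg : ∀ s ∈ Icc 0 t, 0 ≤ w s)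
    (hw : ∀ τ ∈ Ioc 0 t, w τ ≤ A + C * ∫ s in (0:ℝ)..τ, K s * w s ^ γ) :
    w t ≤ (A ^ (1 - γ) + (1 - γ) * C * ∫ s in (0:ℝ)..t, K s) ^ (1 / (1 - γ)) := by
  obtain ⟨hγ0, hγ1⟩ := hγ
  set Φ := fun τ => A + C * ∫ s in (0:ℝ)..τ, K s * w s ^ γ
  have hwγ_cont : ContinuousOn (fun s => w s ^ γ) (Icc 0 t) :=
    hw_cont.rpow_const fun _ _ => Or.inr hγ0.le
  have hKw_int : IntervalIntegrable (fun s => K s * w s ^ γ) volume 0 t :=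
    hK_int.mul_continuousOn (by rwa [uIcc_of_le ht.le])
  have hΦ_pos : ∀ τ ∈ Icc 0 t, 0 < Φ τ := fun τ hτ => by
    have : 0 ≤ ∫ s in (0:ℝ)..τ, K s * w s ^ γ :=
      intervalIntegral_nonneg_of_Ioc hτ.1 fun s hs =>
        mul_nonneg (hK_nonneg s ⟨hs.1, hs.2.trans hτ.2⟩)
          (Real.rpow_nonneg (hw_nonneg s ⟨hs.1.le, hs.2.trans hτ.2⟩) _)
    positivity
  have hcomp := rpow_le_rpow_add_of_hasDerivAt_le (Φ := Φ) (Φ' := fun τ => C * (K τ * w τ ^ γ))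
    (P := fun τ => C * ∫ s in (0:ℝ)..τ, K s) (k := fun τ => C * K τ) hγ1.le ht.le
    (continuousOn_const.add (continuousOn_const.mul (continuousOn_primitive_of_le ht.le hKw_int)))
    hΦ_pos
    (continuousOn_const.mul (continuousOn_primitive_of_le ht.le hK_int))
    (fun τ hτ => ((hasDerivAt_integral_of_continuousOn_Ioo hKw_int
      (hK_cont.mul (hwγ_cont.mono Ioo_subset_Icc_self)) hτ).const_mul C).const_add A)
    (fun τ hτ => (hasDerivAt_integral_of_continuousOn_Ioo hK_int hK_cont hτ).const_mul C)
    (fun τ hτ => by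
      show C * (K τ * w τ ^ γ) ≤ C * K τ * Φ τ ^ γ
      rw [mul_assoc]
      gcongr
      · exact hK_nonneg τ (Ioo_subset_Ioc_self hτ)
      · exact hw_nonneg τ (Ioo_subset_Icc_self hτ)
      · exact hw τ (Ioo_subset_Ioc_self hτ))
  have hΦt := hΦ_pos t (right_mem_Icc.2 ht.le)
  simp only [Φ, intervalIntegral.integral_same, mul_zero, add_zero, sub_zero] at hcomp
  calc w t ≤ Φ t := hw t (right_mem_Ioc.2 ht)
    _ = (Φ t ^ (1 - γ)) ^ (1 / (1 - γ)) := by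
        rw [← Real.rpow_mul hΦt.le, mul_one_div_cancel (by linarith), Real.rpow_one]
    _ ≤ (A ^ (1 - γ) + (1 - γ) * C * ∫ s in (0:ℝ)..t, K s) ^ (1 / (1 - γ)) := by
        rw [mul_assoc]
        gcongr

theorem bihari_rpow {A C γ t : ℝ} (hA : 0 ≤ A) (hC : 0 ≤ C) (hγ : γ ∈ Ioo 0 1)
    (ht : 0 < t) {K w : ℝ → ℝ} (hK_cont : ContinuousOn K (Ioo 0 t))
    (hK_nonneg : ∀ s ∈ Ioc 0 t, 0 ≤ K s) (hK_int : IntervalIntegrable K volume 0 t)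
    (hw_cont : ContinuousOn w (Icc 0 t)) (hw_nonneg : ∀ s ∈ Icc 0 t, 0 ≤ w s)
    (hw : ∀ τ ∈ Ioc 0 t, w τ ≤ A + C * ∫ s in (0:ℝ)..τ, K s * w s ^ γ) :
    w t ≤ (A ^ (1 - γ) + (1 - γ) * C * ∫ s in (0:ℝ)..t, K s) ^ (1 / (1 - γ)) := by
  -- `Φ ^ (1 - γ)` is not differentiable where `Φ` vanishes, so `A = 0` is reached as a limit.
  set F := fun A' : ℝ => (A' ^ (1 - γ) + (1 - γ) * C * ∫ s in (0:ℝ)..t, K s) ^ (1 / (1 - γ))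
  have hF : ContinuousAt F A :=
    ((continuousAt_id.rpow_const (Or.inr (sub_nonneg.2 hγ.2.le))).add continuousAt_const).rpow_const
      (Or.inr (by have := hγ.2; positivity))
  refine ge_of_tendsto (hF.continuousWithinAt (s := Ioi A)).tendsto ?_
  filter_upwards [self_mem_nhdsWithin] with A' hA'
  exact bihari_rpow_of_pos (hA.trans_lt hA') hC hγ ht hK_cont hK_nonneg hK_int hw_cont hw_nonneg
    fun τ hτ => (hw τ hτ).trans (by have := mem_Ioi.1 hA'; linarith)

lemma holderConjugate_and_pos_of_inv_lt {β p q : ℝ} (hβ0 : 0 < β) (hβ1 : β ≤ 1) (hp : 1 / β < p)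
    (hq : q = p / (p - 1)) : p.HolderConjugate q ∧ 0 < q * β - q + 1 := by
  have hpβ : 1 < p * β := by rwa [div_lt_iff₀ hβ0] at hp
  have hp1 : 1 < p := by nlinarith
  refine ⟨hq ▸ Real.HolderConjugate.conjExponent hp1, ?_⟩
  rw [hq, show p / (p - 1) * β - p / (p - 1) + 1 = (p * β - 1) / (p - 1) by
    field_simp [(sub_pos.2 hp1).ne']; ring]
  exact div_pos (by linarith) (by linarith)

lemma mul_rpow_eq_rpow_mul_mul_rpow {s β γ l u : ℝ} (hs : 0 < s) (hv : 0 ≤ s ^ (1 - β) * u) :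
    l * u ^ γ = s ^ (β - 1) * (s ^ ((1 - γ) * (1 - β)) * l * (s ^ (1 - β) * u) ^ γ) := by
  have hu : 0 ≤ u := (mul_nonneg_iff_of_pos_left (Real.rpow_pos_of_pos hs _)).1 hv
  rw [Real.mul_rpow (Real.rpow_nonneg hs.le _) hu, ← Real.rpow_mul hs.le]
  calc l * u ^ γ = s ^ (β - 1 + (1 - γ) * (1 - β) + (1 - β) * γ) * (l * u ^ γ) := by
        rw [show β - 1 + (1 - γ) * (1 - β) + (1 - β) * γ = 0 by ring, Real.rpow_zero, one_mul]
    _ = _ := by rw [Real.rpow_add hs, Real.rpow_add hs]; ring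

lemma rpow_mul_integral_le_of_rescaled {β γ p q τ : ℝ} {l u : ℝ → ℝ} (hβ : β < 1) (hγ : 0 ≤ γ)
    (hpq : p.HolderConjugate q) (hx : 0 < q * β - q + 1) (hτ : 0 < τ)
    (hl_nonneg : ∀ s ∈ Ioi (0:ℝ), 0 ≤ l s)
    (hl_cont : ContinuousOn (fun s => s ^ ((1 - γ) * (1 - β)) * l s) (Ioi 0))
    (hl_lp : IntervalIntegrable (fun s => (s ^ ((1 - γ) * (1 - β)) * l s) ^ p) volume 0 τ)
    (hu_cont : ContinuousOn (fun s => s ^ (1 - β) * u s) (Ici 0))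
    (hu_nonneg : ∀ s ∈ Ici (0:ℝ), 0 ≤ s ^ (1 - β) * u s) :
    τ ^ (1 - β) * ∫ s in (0:ℝ)..τ, (τ - s) ^ (β - 1) * (l s * u s ^ γ) ≤
      2 ^ (1 / q) * τ ^ (β - 1 + 1 / q) / (q * β - q + 1) ^ (1 / q) *
        (∫ s in (0:ℝ)..τ, (s ^ ((1 - γ) * (1 - β)) * l s) ^ p * ((s ^ (1 - β) * u s) ^ p) ^ γ)
          ^ (1 / p) := by
  set L := fun s : ℝ => s ^ ((1 - γ) * (1 - β)) * l s
  set v := fun s : ℝ => s ^ (1 - β) * u s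
  have hL : ∀ s ∈ Ioc 0 τ, 0 ≤ L s := fun s hs =>
    mul_nonneg (Real.rpow_nonneg hs.1.le _) (hl_nonneg s hs.1)
  have hv : ∀ s ∈ Ioc 0 τ, 0 ≤ v s := fun s hs => hu_nonneg s (mem_Ici.2 hs.1.le)
  have hgp : EqOn (fun s => L s ^ p * (v s ^ p) ^ γ) (fun s => (L s * v s ^ γ) ^ p) (uIoc 0 τ) :=
    fun s hs => by
      rw [uIoc_of_le hτ.le] at hs
      simp only
      rw [Real.mul_rpow (hL s hs) (Real.rpow_nonneg (hv s hs) _), ← Real.rpow_mul (hv s hs),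
        ← Real.rpow_mul (hv s hs), mul_comm γ p]
  have hgp_int : IntervalIntegrable (fun s => (L s * v s ^ γ) ^ p) volume 0 τ := by
    refine (hl_lp.mul_continuousOn (g := fun s => (v s ^ p) ^ γ) ?_).congr hgp
    rw [uIcc_of_le hτ.le]
    exact ((hu_cont.mono Icc_subset_Ici_self).rpow_const fun _ _ => Or.inr hpq.nonneg).rpow_const
      fun _ _ => Or.inr hγ
  have hkernel : ∫ s in (0:ℝ)..τ, (τ - s) ^ (β - 1) * (l s * u s ^ γ)
      = ∫ s in (0:ℝ)..τ, (τ - s) ^ (β - 1) * s ^ (β - 1) * (L s * v s ^ γ) := by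
    refine intervalIntegral.integral_congr_ae (ae_of_all _ fun s hs => ?_)
    rw [uIoc_of_le hτ.le] at hs
    rw [mul_rpow_eq_rpow_mul_mul_rpow hs.1 (hv s hs), ← mul_assoc]
  rw [hkernel, intervalIntegral.integral_congr_ae (ae_of_all _ fun s hs => hgp hs)]
  exact integral_rpow_sub_mul_rpow_mul_le hβ hpq hx hτ
    (fun s hs => mul_nonneg (hL s hs) (Real.rpow_nonneg (hv s hs) _))
    (((hl_cont.mono Ioc_subset_Ioi_self).mul
      ((hu_cont.mono fun s hs => mem_Ici.2 hs.1.le).rpow_const fun _ _ => Or.inr hγ))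
        |>.aestronglyMeasurable measurableSet_Ioc) hgp_int

lemma rescaled_le_add_mul_integral {a β γ p q τ : ℝ} {b l u : ℝ → ℝ} (hβ : β < 1) (hγ : 0 ≤ γ)
    (hpq : p.HolderConjugate q) (hx : 0 < q * β - q + 1) (hτ : 0 < τ) (hb : 0 ≤ b τ)
    (hl_nonneg : ∀ s ∈ Ioi (0:ℝ), 0 ≤ l s)
    (hl_cont : ContinuousOn (fun s => s ^ ((1 - γ) * (1 - β)) * l s) (Ioi 0))
    (hl_lp : IntervalIntegrable (fun s => (s ^ ((1 - γ) * (1 - β)) * l s) ^ p) volume 0 τ)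
    (hu_cont : ContinuousOn (fun s => s ^ (1 - β) * u s) (Ici 0))
    (hu_nonneg : ∀ s ∈ Ici (0:ℝ), 0 ≤ s ^ (1 - β) * u s)
    (hu : u τ ≤ a * τ ^ (β - 1) + b τ * ∫ s in (0:ℝ)..τ, (τ - s) ^ (β - 1) * (l s * u s ^ γ)) :
    τ ^ (1 - β) * u τ ≤ a + 2 ^ (1 / q) * b τ * τ ^ (β - 1 + 1 / q) / (q * β - q + 1) ^ (1 / q) *
      (∫ s in (0:ℝ)..τ, (s ^ ((1 - γ) * (1 - β)) * l s) ^ p * ((s ^ (1 - β) * u s) ^ p) ^ γ)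
        ^ (1 / p) := by
  have hτβ : τ ^ (1 - β) * τ ^ (β - 1) = 1 := by
    rw [← Real.rpow_add hτ, sub_add_sub_cancel', sub_self, Real.rpow_zero]
  calc τ ^ (1 - β) * u τ
      ≤ τ ^ (1 - β) * (a * τ ^ (β - 1) +
          b τ * ∫ s in (0:ℝ)..τ, (τ - s) ^ (β - 1) * (l s * u s ^ γ)) :=
        mul_le_mul_of_nonneg_left hu (Real.rpow_nonneg hτ.le _)
    _ = a + b τ * (τ ^ (1 - β) * ∫ s in (0:ℝ)..τ, (τ - s) ^ (β - 1) * (l s * u s ^ γ)) := by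
        linear_combination a * hτβ
    _ ≤ a + b τ * (2 ^ (1 / q) * τ ^ (β - 1 + 1 / q) / (q * β - q + 1) ^ (1 / q) *
          (∫ s in (0:ℝ)..τ, (s ^ ((1 - γ) * (1 - β)) * l s) ^ p * ((s ^ (1 - β) * u s) ^ p) ^ γ)
            ^ (1 / p)) := by
        grw [rpow_mul_integral_le_of_rescaled hβ hγ hpq hx hτ hl_nonneg hl_cont hl_lp hu_cont
          hu_nonneg]
    _ = _ := by ring

lemma coeff_nonneg_and_le {β q τ t : ℝ} {b c : ℝ → ℝ} (hq : 0 < q) (hx : 0 < q * β - q + 1)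
    (hb_mono : MonotoneOn b (Ici 0)) (hb_nonneg : ∀ t ∈ Ici (0:ℝ), 0 ≤ b t)
    (hc : ∀ t, c t = (2:ℝ) ^ (1/q) * b t * t ^ (β - 1 + 1/q) / (q * β - q + 1) ^ (1/q))
    (hτ : 0 < τ) (hτt : τ ≤ t) : 0 ≤ c τ ∧ c τ ≤ c t := by
  have hexp : 0 ≤ β - 1 + 1 / q := by
    rw [show β - 1 + 1 / q = (q * β - q + 1) / q by field_simp]
    positivity
  have hbτ := hb_nonneg τ (mem_Ici.2 hτ.le)
  have hbt := hb_mono (mem_Ici.2 hτ.le) (mem_Ici.2 (hτ.le.trans hτt)) hτt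
  have hτe := Real.rpow_nonneg hτ.le (β - 1 + 1 / q)
  rw [hc, hc]
  refine ⟨by positivity, ?_⟩
  gcongr
  exact mul_nonneg (by positivity) (hbτ.trans hbt)

lemma rpow_le_of_le_add_mul_rpow {v a c X p : ℝ} (hv : 0 ≤ v) (ha : 0 ≤ a) (hc : 0 ≤ c)
    (hX : 0 ≤ X) (hp : 1 ≤ p) (h : v ≤ a + c * X ^ (1 / p)) :
    v ^ p ≤ 2 ^ (p - 1) * a ^ p + 2 ^ (p - 1) * c ^ p * X := by
  calc v ^ p ≤ (a + c * X ^ (1 / p)) ^ p := by gcongr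
    _ ≤ 2 ^ (p - 1) * (a ^ p + (c * X ^ (1 / p)) ^ p) :=
        Real.rpow_add_le_mul_rpow_add_rpow ha (by positivity) hp
    _ = _ := by
        rw [Real.mul_rpow hc (by positivity), ← Real.rpow_mul hX,
          one_div_mul_cancel (by linarith), Real.rpow_one]
        ring

lemma rescaled_rpow_le_add_mul_integral {a β γ p q t : ℝ} {b c l u : ℝ → ℝ} (ha : 0 ≤ a)
    (hβ : β < 1) (hγ : 0 ≤ γ) (hpq : p.HolderConjugate q) (hx : 0 < q * β - q + 1)
    (hb_mono : MonotoneOn b (Ici 0)) (hb_nonneg : ∀ t ∈ Ici (0:ℝ), 0 ≤ b t)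
    (hl_nonneg : ∀ t ∈ Ioi (0:ℝ), 0 ≤ l t)
    (hl_cont : ContinuousOn (fun t => t ^ ((1 - γ) * (1 - β)) * l t) (Ioi 0))
    (hl_lp : ∀ t : ℝ, 0 ≤ t →
      IntervalIntegrable (fun s => (s ^ ((1 - γ) * (1 - β)) * l s) ^ p) volume 0 t)
    (hu_cont : ContinuousOn (fun t => t ^ (1 - β) * u t) (Ici 0))
    (hu_nonneg : ∀ t ∈ Ici (0:ℝ), 0 ≤ t ^ (1 - β) * u t)
    (hu : ∀ t ∈ Ioi (0:ℝ),
      u t ≤ a * t ^ (β - 1) + b t * ∫ s in (0:ℝ)..t, (t - s) ^ (β - 1) * (l s * u s ^ γ))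
    (hc : ∀ t, c t = (2:ℝ) ^ (1/q) * b t * t ^ (β - 1 + 1/q) / (q * β - q + 1) ^ (1/q)) :
    ∀ τ ∈ Ioc 0 t, (τ ^ (1 - β) * u τ) ^ p ≤ 2 ^ (p - 1) * a ^ p + 2 ^ (p - 1) * c t ^ p *
      ∫ s in (0:ℝ)..τ, (s ^ ((1 - γ) * (1 - β)) * l s) ^ p * ((s ^ (1 - β) * u s) ^ p) ^ γ := by
  intro τ hτ
  obtain ⟨hcτ, hcτt⟩ := coeff_nonneg_and_le hpq.symm.pos hx hb_mono hb_nonneg hc hτ.1 hτ.2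
  have hI : 0 ≤
      ∫ s in (0:ℝ)..τ, (s ^ ((1 - γ) * (1 - β)) * l s) ^ p * ((s ^ (1 - β) * u s) ^ p) ^ γ :=
    intervalIntegral_nonneg_of_Ioc hτ.1.le fun s hs => mul_nonneg
      (Real.rpow_nonneg (mul_nonneg (Real.rpow_nonneg hs.1.le _) (hl_nonneg s hs.1)) _)
      (Real.rpow_nonneg (Real.rpow_nonneg (hu_nonneg s (mem_Ici.2 hs.1.le)) _) _)
  refine rpow_le_of_le_add_mul_rpow (hu_nonneg τ (mem_Ici.2 hτ.1.le)) ha (hcτ.trans hcτt) hI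
    hpq.lt.le ((rescaled_le_add_mul_integral hβ hγ hpq hx hτ.1
      (hb_nonneg τ (mem_Ici.2 hτ.1.le)) hl_nonneg hl_cont (hl_lp τ hτ.1.le) hu_cont hu_nonneg
      (hu τ hτ.1)).trans ?_)
  rw [← hc]
  have := Real.rpow_nonneg hI (1 / p)
  gcongr

lemma rpow_bihari_bound_eq {a c I γ p : ℝ} (ha : 0 ≤ a) (hc : 0 ≤ c) (hI : 0 ≤ I) (hγ : γ < 1)
    (hp : 0 < p) :
    (((2 ^ (p - 1) * a ^ p) ^ (1 - γ) + (1 - γ) * (2 ^ (p - 1) * c) * I) ^ (1 / (1 - γ)))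
        ^ (1 / p)
      = 2 ^ (1 - 1 / p) * (a ^ (p * (1 - γ)) + (1 - γ) * 2 ^ ((p - 1) * γ) * c * I)
        ^ (1 / (p * (1 - γ))) := by
  have h1γ : 0 < 1 - γ := sub_pos.2 hγ
  have hsplit : (2:ℝ) ^ (p - 1) = 2 ^ ((p - 1) * (1 - γ)) * 2 ^ ((p - 1) * γ) := by
    rw [← Real.rpow_add two_pos]; ring_nf
  have hZ : 0 ≤ a ^ (p * (1 - γ)) + (1 - γ) * 2 ^ ((p - 1) * γ) * c * I := by positivity
  rw [Real.mul_rpow (by positivity) (by positivity), ← Real.rpow_mul zero_le_two,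
    ← Real.rpow_mul ha, hsplit, show ∀ A B Z : ℝ, A * Z + (1 - γ) * (A * B * c) * I
      = A * (Z + (1 - γ) * B * c * I) from fun _ _ _ => by ring,
    ← Real.rpow_mul (by positivity), Real.mul_rpow (by positivity) hZ, ← Real.rpow_mul zero_le_two]
  congr 2
  · field_simp
  · field_simp

lemma intervalIntegral_mul_rpow_eq {e p τ : ℝ} {l : ℝ → ℝ} (hτ : 0 ≤ τ)
    (hl : ∀ s ∈ Ioi (0:ℝ), 0 ≤ l s) :
    ∫ s in (0:ℝ)..τ, (s ^ e * l s) ^ p = ∫ s in (0:ℝ)..τ, s ^ (e * p) * l s ^ p := by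
  refine intervalIntegral.integral_congr_ae (ae_of_all _ fun s hs => ?_)
  rw [uIoc_of_le hτ] at hs
  rw [Real.mul_rpow (Real.rpow_nonneg hs.1.le _) (hl s hs.1), ← Real.rpow_mul hs.1.le]

theorem stmt7_general (a γ β p q : ℝ) (ha : 0 ≤ a) (hγ : γ ∈ Ioo (0:ℝ) 1)
    (hβ : β ∈ Ioo (0:ℝ) 1) (hp : 1/β < p) (hq : q = p / (p - 1))
    (b : ℝ → ℝ)
    (hb_mono : MonotoneOn b (Ici 0))
    (hb_nonneg : ∀ t ∈ Ici (0:ℝ), 0 ≤ b t)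
    (l : ℝ → ℝ)
    (hl_nonneg : ∀ t ∈ Ioi (0:ℝ), 0 ≤ l t)
    (hl_cont : ContinuousOn (fun t => t ^ ((1 - γ) * (1 - β)) * l t) (Ioi 0))
    (hl_lp : ∀ t : ℝ, 0 ≤ t →
      IntervalIntegrable (fun s => (s ^ ((1 - γ) * (1 - β)) * l s) ^ p) volume 0 t)
    (u : ℝ → ℝ)
    (hu_cont : ContinuousOn (fun t => t ^ (1 - β) * u t) (Ici 0))
    (hu_nonneg : ∀ t ∈ Ici (0:ℝ), 0 ≤ t ^ (1 - β) * u t)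
    (hu : ∀ t ∈ Ioi (0:ℝ),
      u t ≤ a * t ^ (β - 1) + b t * ∫ s in (0:ℝ)..t, (t - s) ^ (β - 1) * (l s * u s ^ γ))
    (c : ℝ → ℝ)
    (hc : ∀ t, c t = (2:ℝ) ^ (1/q) * b t * t ^ (β - 1 + 1/q) / (q * β - q + 1) ^ (1/q)) :
    ∀ t ∈ Ioi (0:ℝ),
      u t ≤ (2:ℝ) ^ (1 - 1/p) * t ^ (β - 1) *
        (a ^ (p * (1 - γ)) + (1 - γ) * (2:ℝ) ^ ((p - 1) * γ) * c t ^ p *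
          ∫ s in (0:ℝ)..t, s ^ (p * (1 - γ) * (1 - β)) * l s ^ p)
        ^ (1 / (p * (1 - γ))) := by
  intro t ht
  obtain ⟨hpq, hx⟩ := holderConjugate_and_pos_of_inv_lt hβ.1 hβ.2.le hp hq
  have hct := (coeff_nonneg_and_le hpq.symm.pos hx hb_mono hb_nonneg hc ht le_rfl).1
  have hK : ∀ s ∈ Ioc 0 t, 0 ≤ (s ^ ((1 - γ) * (1 - β)) * l s) ^ p := fun s hs =>
    Real.rpow_nonneg (mul_nonneg (Real.rpow_nonneg hs.1.le _) (hl_nonneg s hs.1)) _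
  have hvt := hu_nonneg t (mem_Ici.2 (le_of_lt ht))
  have hB := bihari_rpow (by positivity) (by positivity) hγ ht
    ((hl_cont.rpow_const fun _ _ => Or.inr hpq.nonneg).mono Ioo_subset_Ioi_self) hK
    (hl_lp t ht.le) ((hu_cont.mono Icc_subset_Ici_self).rpow_const fun _ _ => Or.inr hpq.nonneg)
    (fun s hs => Real.rpow_nonneg (hu_nonneg s hs.1) _)
    (rescaled_rpow_le_add_mul_integral ha hβ.2 hγ.1.le hpq hx hb_mono hb_nonneg hl_nonneg hl_cont
      hl_lp hu_cont hu_nonneg hu hc)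
  calc u t = t ^ (β - 1) * ((t ^ (1 - β) * u t) ^ p) ^ (1 / p) := by
        rw [← Real.rpow_mul hvt, mul_one_div_cancel hpq.ne_zero, Real.rpow_one, ← mul_assoc,
          ← Real.rpow_add ht, sub_add_sub_cancel', sub_self, Real.rpow_zero, one_mul]
    _ ≤ _ := mul_le_mul_of_nonneg_left
        (Real.rpow_le_rpow (Real.rpow_nonneg hvt _) hB hpq.one_div_nonneg)
        (Real.rpow_nonneg (le_of_lt ht) _)
    _ = _ := by
      rw [rpow_bihari_bound_eq ha (Real.rpow_nonneg hct _)
        (intervalIntegral_nonneg_of_Ioc ht.le hK) hγ.2 hpq.pos,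
        intervalIntegral_mul_rpow_eq ht.le hl_nonneg,
        show (1 - γ) * (1 - β) * p = p * (1 - γ) * (1 - β) by ring]
      ring

/-- Corollary 2.6, case 0 < γ < 1:
`u(t) ≤ a t^{β-1} + b(t) ∫₀ᵗ (t-s)^{β-1} l(s) u(s)^γ ds` implies
`u(t) ≤ 2^{1-1/p} t^{β-1} (a^{p(1-γ)} + (1-γ) 2^{(p-1)γ} c(t)^p
  ∫₀ᵗ s^{p(1-γ)(1-β)} l(s)^p ds)^{1/(p(1-γ))}`,
where `c(t) = 2^{1/q} b(t) t^{β-1+1/q} / (qβ-q+1)^{1/q}`. -/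
theorem stmt7 (a γ β p q : ℝ) (ha : 0 ≤ a) (hγ : γ ∈ Ioo (0:ℝ) 1)
    (hβ : β ∈ Ioo (0:ℝ) 1) (hp : 1/β < p) (hq : q = p / (p - 1))
    (b : ℝ → ℝ)
    (hb_cont : ContinuousOn b (Ici 0)) (hb_mono : MonotoneOn b (Ici 0))
    (hb_nonneg : ∀ t ∈ Ici (0:ℝ), 0 ≤ b t)
    (l : ℝ → ℝ)
    (hl_nonneg : ∀ t ∈ Ioi (0:ℝ), 0 ≤ l t)
    (hl_cont : ContinuousOn (fun t => t ^ ((1 - γ) * (1 - β)) * l t) (Ioi 0))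
    (hl_lp : ∀ t : ℝ, 0 ≤ t →
      IntervalIntegrable (fun s => (s ^ ((1 - γ) * (1 - β)) * l s) ^ p) volume 0 t)
    (u : ℝ → ℝ)
    (hu_cont : ContinuousOn (fun t => t ^ (1 - β) * u t) (Ici 0))
    (hu_nonneg : ∀ t ∈ Ici (0:ℝ), 0 ≤ t ^ (1 - β) * u t)
    (hu : ∀ t ∈ Ioi (0:ℝ),
      u t ≤ a * t ^ (β - 1) + b t * ∫ s in (0:ℝ)..t, (t - s) ^ (β - 1) * (l s * u s ^ γ))
    (c : ℝ → ℝ)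
    (hc : ∀ t, c t = (2:ℝ) ^ (1/q) * b t * t ^ (β - 1 + 1/q) / (q * β - q + 1) ^ (1/q)) :
    ∀ t ∈ Ioi (0:ℝ),
      u t ≤ (2:ℝ) ^ (1 - 1/p) * t ^ (β - 1) *
        (a ^ (p * (1 - γ)) + (1 - γ) * (2:ℝ) ^ ((p - 1) * γ) * c t ^ p *
          ∫ s in (0:ℝ)..t, s ^ (p * (1 - γ) * (1 - β)) * l s ^ p)
        ^ (1 / (p * (1 - γ))) :=
  stmt7_general a γ β p q ha hγ hβ hp hq b hb_mono hb_nonneg l hl_nonneg hl_cont hl_lp u hu_cont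
    hu_nonneg hu c hc
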